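/- If k vectors c_1,…,c_k in R^{m'} are orthonormal and embeddings z_1,…,z_k are unit vectors with z_j·c_j ≥ 1 − ε for all j where ε < 1 − 1/√2, then the Gram matrix of {z_j} is strictly diagonally dominant, hence the z_j are linearly independent and span a k-dimensional subspace (approximate collapse prevention). -/

import Mathlib

/-!
Cosine similarity `1 - ε` with a unit prototype puts each `z j` within `√(2ε)` of `c j`, so every
off-diagonal Gram entry `⟪z i, z j⟫` is a perturbation of `⟪c i, c j⟫ = 0` of size at most
`2√(2ε) + 2ε`. Under the threshold the Gram matrix is then strictly diagonally dominant, hence has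
nonzero determinant (Lévy–Desplanques), which is equivalent to linear independence.
-/

open scoped RealInnerProductSpace BigOperators

section

variable {E : Type*} [NormedAddCommGroup E] [InnerProductSpace ℝ E]

theorem norm_sub_le_sqrt_of_one_sub_le_inner {x y : E} {ε : ℝ} (hx : ‖x‖ = 1) (hy : ‖y‖ = 1)
    (hxy : 1 - ε ≤ ⟪x, y⟫) : ‖x - y‖ ≤ √(2 * ε) := by
  have hsq : ‖x - y‖ ^ 2 ≤ 2 * ε := by
    rw [norm_sub_sq_real, hx, hy]
    linarith
  simpa only [abs_norm] using Real.abs_le_sqrt hsq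

theorem abs_real_inner_sub_inner_le (x y u v : E) :
    |⟪x, y⟫ - ⟪u, v⟫| ≤ ‖x - u‖ * ‖v‖ + ‖u‖ * ‖y - v‖ + ‖x - u‖ * ‖y - v‖ := by
  have hsplit : ⟪x, y⟫ - ⟪u, v⟫ = ⟪x - u, v⟫ + ⟪u, y - v⟫ + ⟪x - u, y - v⟫ := by
    simp only [inner_sub_left, inner_sub_right]
    ring
  rw [hsplit]
  calc |⟪x - u, v⟫ + ⟪u, y - v⟫ + ⟪x - u, y - v⟫|
      ≤ |⟪x - u, v⟫| + |⟪u, y - v⟫| + |⟪x - u, y - v⟫| := abs_add_three _ _ _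
    _ ≤ ‖x - u‖ * ‖v‖ + ‖u‖ * ‖y - v‖ + ‖x - u‖ * ‖y - v‖ := by
      gcongr <;> exact abs_real_inner_le_norm _ _

theorem Orthonormal.abs_inner_le_of_norm_sub_le {ι : Type*} {c z : ι → E} {δ : ℝ}
    (hc : Orthonormal ℝ c) (hzc : ∀ j, ‖z j - c j‖ ≤ δ) {i j : ι} (hij : i ≠ j) :
    |⟪z i, z j⟫| ≤ 2 * δ + δ * δ := by
  have h := abs_real_inner_sub_inner_le (z i) (z j) (c i) (c j)
  rw [hc.2 hij, sub_zero, hc.1 i, hc.1 j] at h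
  have hδ : 0 ≤ δ := (norm_nonneg _).trans (hzc i)
  nlinarith [hzc i, hzc j, norm_nonneg (z i - c i)]

theorem sum_abs_inner_lt_inner_self_of_abs_inner_le {ι : Type*} [Fintype ι] [DecidableEq ι]
    {z : ι → E} {B : ℝ} (hz : ∀ j, ‖z j‖ = 1) (hoff : ∀ i j, i ≠ j → |⟪z i, z j⟫| ≤ B)
    (hB : ((Fintype.card ι : ℝ) - 1) * B < 1) (i : ι) :
    ∑ j ∈ Finset.univ \ {i}, |⟪z i, z j⟫| < ⟪z i, z i⟫ := by
  have hcard : ((Finset.univ \ {i} : Finset ι).card : ℝ) = (Fintype.card ι : ℝ) - 1 := by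
    rw [Finset.card_univ_sdiff, Nat.cast_sub (Finset.card_le_univ _), Finset.card_singleton, Nat.cast_one]
  calc ∑ j ∈ Finset.univ \ {i}, |⟪z i, z j⟫|
      ≤ ∑ _j ∈ Finset.univ \ {i}, B :=
        Finset.sum_le_sum fun j hj => hoff i j (by simpa [eq_comm] using hj)
    _ = ((Fintype.card ι : ℝ) - 1) * B := by rw [Finset.sum_const, nsmul_eq_mul, hcard]
    _ < 1 := hB
    _ = ⟪z i, z i⟫ := by rw [real_inner_self_eq_norm_sq, hz i, one_pow]

theorem linearIndependent_of_sum_abs_inner_lt_inner_self {ι : Type*} [Fintype ι] [DecidableEq ι]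
    {v : ι → E} (h : ∀ i, ∑ j ∈ Finset.univ \ {i}, |⟪v i, v j⟫| < ⟪v i, v i⟫) :
    LinearIndependent ℝ v :=
  Matrix.det_gram_ne_zero_iff_linearIndependent.mp <| det_ne_zero_of_sum_row_lt_diag
    fun i => by
      simpa only [Matrix.gram_apply, Real.norm_eq_abs, Finset.sdiff_singleton_eq_erase,
        abs_of_nonneg (real_inner_self_nonneg (x := v i))] using h i

end

theorem approximate_clop_prevents_collapse_general
    (m' k : ℕ) (ε : ℝ) (hε0 : 0 ≤ ε)
    (hε : ((k : ℝ) - 1) * (2 * Real.sqrt (2 * ε) + 2 * ε) < 1)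
    (c : Fin k → EuclideanSpace ℝ (Fin m')) (hc : Orthonormal ℝ c)
    (z : Fin k → EuclideanSpace ℝ (Fin m')) (hz : ∀ j, ‖z j‖ = 1)
    (hclose : ∀ j, 1 - ε ≤ ⟪z j, c j⟫) :
    (∀ i : Fin k, ∑ j ∈ Finset.univ \ {i}, |⟪z i, z j⟫| < ⟪z i, z i⟫) ∧
    LinearIndependent ℝ z ∧
    Module.finrank ℝ (Submodule.span ℝ (Set.range z)) = k := by
  have hnear : ∀ j, ‖z j - c j‖ ≤ √(2 * ε) := fun j =>
    norm_sub_le_sqrt_of_one_sub_le_inner (hz j) (hc.1 j) (hclose j)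
  have hoff : ∀ i j, i ≠ j → |⟪z i, z j⟫| ≤ 2 * √(2 * ε) + 2 * ε := fun i j hij => by
    simpa only [Real.mul_self_sqrt (by positivity : (0 : ℝ) ≤ 2 * ε)] using
      hc.abs_inner_le_of_norm_sub_le hnear hij
  have hdiag := sum_abs_inner_lt_inner_self_of_abs_inner_le hz hoff (by rwa [Fintype.card_fin])
  have hli := linearIndependent_of_sum_abs_inner_lt_inner_self hdiag
  exact ⟨hdiag, hli, by rw [finrank_span_eq_card hli, Fintype.card_fin]⟩

/-- Approximate collapse prevention: if unit embeddings `z j` are `ε`-close (in cosine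
similarity) to orthonormal prototypes `c j`, with `ε ≥ 0` small enough that
`(k−1)(2√(2ε) + 2ε) < 1` (a quantitatively correct version of the `ε < 1 − 1/√2`
threshold), then the Gram matrix of the `z j` is strictly diagonally dominant, the `z j`
are linearly independent, and they span a `k`-dimensional subspace. -/
theorem approximate_clop_prevents_collapse
    (m' k : ℕ) (hk : k ≤ m') (ε : ℝ) (hε0 : 0 ≤ ε)
    (hε : ((k : ℝ) - 1) * (2 * Real.sqrt (2 * ε) + 2 * ε) < 1)
    (c : Fin k → EuclideanSpace ℝ (Fin m')) (hc : Orthonormal ℝ c)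
    (z : Fin k → EuclideanSpace ℝ (Fin m')) (hz : ∀ j, ‖z j‖ = 1)
    (hclose : ∀ j, 1 - ε ≤ ⟪z j, c j⟫) :
    (∀ i : Fin k, ∑ j ∈ Finset.univ \ {i}, |⟪z i, z j⟫| < ⟪z i, z i⟫) ∧
    LinearIndependent ℝ z ∧
    Module.finrank ℝ (Submodule.span ℝ (Set.range z)) = k :=
  approximate_clop_prevents_collapse_general m' k ε hε0 hε c hc z hz hclose
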